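/- Let p be a prime, n ≥ 1, and P a Sylow p-subgroup of the symmetric group S_{pⁿ}. Then P has a unique subgroup of index p of the form P₁ × ⋯ × P_p, where {1,…,pⁿ} = N₁ ∪ ⋯ ∪ N_p is a partition into p sets of size p^{n−1} and each Pᵢ is a Sylow p-subgroup of Sym(Nᵢ). -/

import Mathlib

/-- `H ≤ Sym(Fin pⁿ)` is a direct product `P₁ × ⋯ × P_p` where `{1,…,pⁿ} = N₁ ∪ ⋯ ∪ N_p`
is a partition into `p` sets of size `p^{n-1}` and each `Pᵢ` is a Sylow `p`-subgroup of
`Sym(Nᵢ)` (a `p`-subgroup supported on `Nᵢ` of order the `p`-part of `(p^{n-1})!`). -/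
def IsSylowProductForm (p n : ℕ) (H : Subgroup (Equiv.Perm (Fin (p ^ n)))) : Prop :=
  ∃ N : Fin p → Finset (Fin (p ^ n)),
    (∀ i j, i ≠ j → Disjoint (N i) (N j)) ∧
    (Finset.univ.biUnion N = Finset.univ) ∧
    (∀ i, (N i).card = p ^ (n - 1)) ∧
    ∃ Q : Fin p → Subgroup (Equiv.Perm (Fin (p ^ n))),
      (∀ i, ∀ g ∈ Q i, ∀ x : Fin (p ^ n), x ∉ N i → g x = x) ∧
      (∀ i, IsPGroup p (Q i)) ∧
      (∀ i, Nat.card (Q i) = p ^ ((p ^ (n - 1)).factorial.factorization p)) ∧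
      H = ⨆ i, Q i

set_option linter.unusedSectionVars false
set_option linter.unusedVariables false
set_option maxHeartbeats 1000000 in
section
open Equiv Finset

namespace UIMaux

lemma digits_sum_pow {p : ℕ} (hp : 2 ≤ p) : ∀ k, (Nat.digits p (p ^ k)).sum = 1
  | 0 => by
      rw [pow_zero, Nat.digits_def' hp Nat.one_pos]
      have h1 : 1 % p = 1 := Nat.mod_eq_of_lt (by omega)
      have h2 : 1 / p = 0 := Nat.div_eq_of_lt (by omega)
      simp [h1, h2]
  | (k + 1) => by
      rw [Nat.digits_def' hp (pow_pos (by omega) _)]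
      have h1 : p ^ (k + 1) % p = 0 := by
        simp [pow_succ, Nat.mul_mod_left]
      have h2 : p ^ (k + 1) / p = p ^ k := by
        rw [pow_succ]; exact Nat.mul_div_cancel _ (by omega)
      simp [h1, h2, digits_sum_pow hp k]

lemma digits_sum_pos {p : ℕ} (hp : 2 ≤ p) : ∀ {m : ℕ}, 0 < m → 0 < (Nat.digits p m).sum := by
  intro m
  induction m using Nat.strong_induction_on with
  | _ m ih =>
    intro hm
    rw [Nat.digits_def' hp hm]
    simp only [List.sum_cons]
    rcases Nat.eq_zero_or_pos (m % p) with h | h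
    · have hdvd : p ∣ m := Nat.dvd_of_mod_eq_zero h
      have hlt : m / p < m := Nat.div_lt_self hm (by omega)
      have hpos : 0 < m / p := Nat.div_pos (Nat.le_of_dvd hm hdvd) (by omega)
      have := ih _ hlt hpos
      omega
    · omega

lemma legendre {p : ℕ} (hp : p.Prime) (c : ℕ) :
    (p - 1) * (Nat.factorial c).factorization p + (Nat.digits p c).sum = c := by
  haveI : Fact p.Prime := ⟨hp⟩
  rw [Nat.factorization_def _ hp, sub_one_mul_padicValNat_factorial]
  exact Nat.sub_add_cancel (Nat.digit_sum_le p c)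

section Partition

variable {Ω : Type*} [Fintype Ω] [DecidableEq Ω] {ι : Type*} [Fintype ι]

/-- A permutation group preserving all parts of a covering family divides the product of
factorials of the part sizes. -/
lemma card_dvd_prod_factorial (N : ι → Finset Ω) (hcov : ∀ x : Ω, ∃ i, x ∈ N i)
    (G : Subgroup (Perm Ω)) (hpres : ∀ g ∈ G, ∀ i, ∀ x ∈ N i, g x ∈ N i) :
    Nat.card G ∣ ∏ i, ((N i).card).factorial := by
  have key : ∀ g ∈ G, ∀ (i) (x : Ω), x ∈ N i ↔ g x ∈ N i := by
    intro g hg i x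
    refine ⟨hpres g hg i x, fun hx => ?_⟩
    have := hpres g⁻¹ (G.inv_mem hg) i (g x) hx
    simpa using this
  let φ : G →* (∀ i : ι, Perm {x // x ∈ N i}) :=
    { toFun := fun g => fun i => Perm.subtypePerm (g : Perm Ω) (fun x => (key g g.2 i x).symm)
      map_one' := by
        funext i; ext x; simp [Perm.subtypePerm_apply]
      map_mul' := by
        intro a b; funext i; ext x; simp [Perm.subtypePerm_apply]; rfl }
  have hinj : Function.Injective φ := by
    intro a b hab
    ext x
    obtain ⟨i, hi⟩ := hcov x
    have h1 : φ a i ⟨x, hi⟩ = φ b i ⟨x, hi⟩ := by rw [hab]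
    exact congrArg Subtype.val h1
  have h1 : Nat.card G = Nat.card φ.range := Nat.card_congr (MonoidHom.ofInjective hinj).toEquiv
  have h2 : Nat.card φ.range ∣ Nat.card (∀ i : ι, Perm {x // x ∈ N i}) :=
    Subgroup.card_subgroup_dvd_card _
  rw [h1]
  refine h2.trans (dvd_of_eq ?_)
  rw [Nat.card_pi]
  refine Finset.prod_congr rfl fun i _ => ?_
  rw [Nat.card_eq_fintype_card, Fintype.card_perm, Fintype.card_coe]

lemma pgroup_exp_le {p : ℕ} (hp : p.Prime) (N : ι → Finset Ω) (hcov : ∀ x : Ω, ∃ i, x ∈ N i)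
    (G : Subgroup (Perm Ω)) (hpres : ∀ g ∈ G, ∀ i, ∀ x ∈ N i, g x ∈ N i)
    {k : ℕ} (hk : Nat.card G = p ^ k) :
    k ≤ ∑ i, (((N i).card).factorial).factorization p := by
  have hd := card_dvd_prod_factorial N hcov G hpres
  rw [hk] at hd
  have hne : ∀ i ∈ (univ : Finset ι), (((N i).card).factorial) ≠ 0 :=
    fun i _ => Nat.factorial_ne_zero _
  have hprodne : (∏ i, ((N i).card).factorial) ≠ 0 := Finset.prod_ne_zero_iff.mpr hne
  have := (hp.pow_dvd_iff_le_factorization hprodne).mp hd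
  rwa [Nat.factorization_prod hne, Finsupp.finset_sum_apply] at this

/-- The sizes of a partition sum to the cardinality. -/
lemma sum_card_partition (N : ι → Finset Ω) (hdisj : ∀ i j, i ≠ j → Disjoint (N i) (N j))
    (hcov : ∀ x : Ω, ∃ i, x ∈ N i) :
    ∑ i, (N i).card = Fintype.card Ω := by
  have hU : (univ : Finset ι).biUnion N = univ := by
    refine Finset.eq_univ_iff_forall.mpr fun x => ?_
    obtain ⟨i, hi⟩ := hcov x
    exact Finset.mem_biUnion.mpr ⟨i, mem_univ i, hi⟩
  have h2 : ((univ : Finset ι).biUnion N).card = ∑ i, (N i).card :=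
    Finset.card_biUnion (fun i _ j _ hij => hdisj i j hij)
  rw [hU, Finset.card_univ] at h2
  exact h2.symm

/-- `(p-1) * ∑ ν_p(cᵢ!) + ∑ digitsum(cᵢ) = |Ω|` for a partition. -/
lemma legendre_partition {p : ℕ} (hp : p.Prime) (N : ι → Finset Ω)
    (hdisj : ∀ i j, i ≠ j → Disjoint (N i) (N j)) (hcov : ∀ x : Ω, ∃ i, x ∈ N i) :
    (p - 1) * (∑ i, (((N i).card).factorial).factorization p)
      + ∑ i, (Nat.digits p ((N i).card)).sum = Fintype.card Ω := by
  rw [Finset.mul_sum, ← Finset.sum_add_distrib]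
  rw [← sum_card_partition N hdisj hcov]
  exact Finset.sum_congr rfl fun i _ => legendre hp _

end Partition

section Pres

variable {Ω : Type*} [Fintype Ω] [DecidableEq Ω]

/-- The subgroup of permutations mapping a finset into itself. -/
def presSG (S : Finset Ω) : Subgroup (Perm Ω) where
  carrier := {g | ∀ x ∈ S, g x ∈ S}
  one_mem' := by intro x hx; simpa using hx
  mul_mem' := by intro a b ha hb x hx; exact ha _ (hb x hx)
  inv_mem' := by
    intro g hg x hx
    have himg : S.image g = S := by
      refine Finset.eq_of_subset_of_card_le ?_ ?_
      · intro y hy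
        obtain ⟨z, hz, rfl⟩ := Finset.mem_image.1 hy
        exact hg z hz
      · rw [Finset.card_image_of_injective _ g.injective]
    have hx' : x ∈ S.image g := by rw [himg]; exact hx
    obtain ⟨y, hy, hxy⟩ := Finset.mem_image.1 hx'
    have : g⁻¹ x = y := by rw [← hxy]; simp
    rwa [this]

@[simp] lemma mem_presSG {S : Finset Ω} {g : Perm Ω} : g ∈ presSG S ↔ ∀ x ∈ S, g x ∈ S :=
  Iff.rfl

/-- The subgroup of permutations fixing a finset pointwise. -/
def fixSG (S : Finset Ω) : Subgroup (Perm Ω) where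
  carrier := {g | ∀ x ∈ S, g x = x}
  one_mem' := by intro x _; simp
  mul_mem' := by
    intro a b ha hb x hx
    simp only [Perm.mul_apply, hb x hx, ha x hx]
  inv_mem' := by
    intro g hg x hx
    have := hg x hx
    calc g⁻¹ x = g⁻¹ (g x) := by rw [this]
    _ = x := by simp

@[simp] lemma mem_fixSG {S : Finset Ω} {g : Perm Ω} : g ∈ fixSG S ↔ ∀ x ∈ S, g x = x :=
  Iff.rfl

end Pres

section Form

variable {Ω : Type*} [Fintype Ω] [DecidableEq Ω] {ι : Type*} [Fintype ι]
variable {N : ι → Finset Ω} {Q : ι → Subgroup (Perm Ω)}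

/-- Each `Q j` preserves each block `N i`. -/
lemma Q_le_presSG (hdisj : ∀ i j, i ≠ j → Disjoint (N i) (N j))
    (hsupp : ∀ i, ∀ g ∈ Q i, ∀ x : Ω, x ∉ N i → g x = x) :
    ∀ j i, Q j ≤ presSG (N i) := by
  intro j i g hg x hx
  rcases eq_or_ne j i with rfl | hne
  · by_contra hgx
    have h1 : g (g x) = g x := hsupp j g hg (g x) hgx
    have := g.injective h1
    rw [this] at hgx
    exact hgx hx
  · have hxj : x ∉ N j := fun hxj => (hdisj j i hne).forall_ne_finset hxj hx rfl
    rw [hsupp j g hg x hxj]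
    exact hx

lemma iSup_le_presSG (hdisj : ∀ i j, i ≠ j → Disjoint (N i) (N j))
    (hsupp : ∀ i, ∀ g ∈ Q i, ∀ x : Ω, x ∉ N i → g x = x) (i : ι) :
    (⨆ j, Q j) ≤ presSG (N i) :=
  iSup_le fun j => Q_le_presSG hdisj hsupp j i

/-- Cardinality of the internal direct product. -/
lemma card_iSup_eq {p a : ℕ} (hdisj : ∀ i j, i ≠ j → Disjoint (N i) (N j))
    (hsupp : ∀ i, ∀ g ∈ Q i, ∀ x : Ω, x ∉ N i → g x = x)
    (hQcard : ∀ i, Nat.card (Q i) = p ^ a) :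
    Nat.card ↥(⨆ i, Q i) = p ^ (Fintype.card ι * a) := by
  have hcomm : Pairwise fun i j : ι => ∀ x y : Perm Ω, x ∈ Q i → y ∈ Q j → Commute x y := by
    intro i j hij x y hx hy
    apply Perm.Disjoint.commute
    intro z
    by_cases hz : z ∈ N i
    · right
      have hzj : z ∉ N j := fun hzj => (hdisj i j hij).forall_ne_finset hz hzj rfl
      exact hsupp j y hy z hzj
    · left; exact hsupp i x hx z hz
  have hind : iSupIndep Q := by
    intro i
    rw [disjoint_iff_inf_le]
    intro g hg
    obtain ⟨hg1, hg2⟩ := hg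
    have hfix : g ∈ fixSG (N i) := by
      refine (iSup_le fun j => iSup_le fun hji => ?_ : (⨆ j, ⨆ _ : j ≠ i, Q j) ≤ fixSG (N i)) hg2
      intro h hh x hx
      have hxj : x ∉ N j := fun hxj => (hdisj j i hji).forall_ne_finset hxj hx rfl
      exact hsupp j h hh x hxj
    have : g = 1 := by
      ext x
      by_cases hx : x ∈ N i
      · simpa using hfix x hx
      · simpa using hsupp i g hg1 x hx
    simp [this, Subgroup.mem_bot]
  have hinj : Function.Injective ⇑(Subgroup.noncommPiCoprod hcomm) :=
    Subgroup.injective_noncommPiCoprod_of_iSupIndep hind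
  have hr : (Subgroup.noncommPiCoprod hcomm).range = ⨆ i, Q i :=
    Subgroup.noncommPiCoprod_range
  calc Nat.card ↥(⨆ i, Q i) = Nat.card ↥(Subgroup.noncommPiCoprod hcomm).range := by rw [hr]
    _ = Nat.card (∀ i, Q i) :=
        (Nat.card_congr (MonoidHom.ofInjective hinj).toEquiv).symm
    _ = ∏ i, Nat.card (Q i) := Nat.card_pi
    _ = ∏ _i : ι, p ^ a := Finset.prod_congr rfl fun i _ => hQcard i
    _ = p ^ (Fintype.card ι * a) := by
        rw [Finset.prod_const, Finset.card_univ, ← pow_mul, Nat.mul_comm]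

end Form

section Normality

/-- In a finite `p`-group, a subgroup of index `p` is normal. -/
lemma normal_of_index_prime {G : Type*} [Group G] [Finite G] {p : ℕ} (hp : p.Prime)
    (hG : IsPGroup p G) {K : Subgroup G} (hK : K.index = p) : K.Normal := by
  classical
  haveI : Fact p.Prime := ⟨hp⟩
  set C := K.normalCore with hC
  have hCle : C ≤ K := K.normalCore_le
  haveI : C.Normal := K.normalCore_normal
  -- the quotient by the core embeds into the permutations of the cosets
  set φ := MulAction.toPermHom G (G ⧸ K) with hφ
  have hker : C = φ.ker := K.normalCore_eq_ker
  haveI : Fintype (G ⧸ K) := Fintype.ofFinite _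
  have hcard1 : Nat.card (G ⧸ C) ∣ Nat.factorial p := by
    have e1 : (G ⧸ C) ≃* φ.range := by
      exact (QuotientGroup.quotientMulEquivOfEq hker).trans (QuotientGroup.quotientKerEquivRange φ)
    have h2 : Nat.card φ.range ∣ Nat.card (Perm (G ⧸ K)) := Subgroup.card_subgroup_dvd_card _
    have h3 : Nat.card (Perm (G ⧸ K)) = Nat.factorial p := by
      rw [Nat.card_eq_fintype_card, Fintype.card_perm, ← Nat.card_eq_fintype_card,
        ← Subgroup.index_eq_card, hK]
    rw [Nat.card_congr e1.toEquiv]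
    rw [h3] at h2
    exact h2
  obtain ⟨k, hk⟩ := IsPGroup.iff_card.mp (hG.to_quotient C)
  have hCidx : C.index = p ^ k := by rw [Subgroup.index_eq_card, hk]
  -- k ≤ 1
  have hk1 : k ≤ 1 := by
    rw [hk] at hcard1
    have := (hp.pow_dvd_iff_le_factorization (Nat.factorial_ne_zero p)).mp hcard1
    have hleg := legendre hp p
    have hds : (Nat.digits p p).sum = 1 := by
      have := digits_sum_pow hp.two_le 1
      rwa [pow_one] at this
    rw [hds] at hleg
    -- (p-1) * ν + 1 = p  ⟹  ν = 1
    have hν : (Nat.factorial p).factorization p = 1 := by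
      have h2 : (p - 1) * (Nat.factorial p).factorization p = (p - 1) * 1 := by
        have := hp.two_le; omega
      exact Nat.eq_of_mul_eq_mul_left (by have := hp.two_le; omega) h2
    omega
  -- k ≥ 1
  have hk2 : 1 ≤ k := by
    by_contra h
    have hk0 : k = 0 := by omega
    have : K.index ∣ C.index := Subgroup.index_dvd_of_le hCle
    rw [hK, hCidx, hk0, pow_zero] at this
    exact hp.one_lt.ne' (Nat.eq_one_of_dvd_one this) |>.elim
  have hkeq : C.index = K.index := by
    rw [hCidx, hK, show k = 1 by omega, pow_one]
  -- conclude C = K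
  have hrel := Subgroup.relIndex_mul_index hCle
  rw [hkeq, hK] at hrel
  have hrel1 : C.relIndex K = 1 := by
    have h2 : C.relIndex K * p = 1 * p := by rw [one_mul]; exact hrel
    exact Nat.eq_of_mul_eq_mul_right hp.pos h2
  have hle2 : K ≤ C := Subgroup.relIndex_eq_one.mp hrel1
  have hKC : K = C := le_antisymm hle2 hCle
  rw [hKC]
  infer_instance

/-- Key arithmetic: `p·ν_p((p^{n-1})!) + 1 = ν_p((p^n)!)`. -/
lemma key_arith {p n : ℕ} (hp : p.Prime) (hn : 1 ≤ n) :
    p * ((p ^ (n - 1)).factorial.factorization p) + 1 = ((p ^ n).factorial.factorization p) := by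
  set a := ((p ^ (n - 1)).factorial.factorization p) with ha
  set b := ((p ^ n).factorial.factorization p) with hb
  have h1 : (p - 1) * a + 1 = p ^ (n - 1) := by
    have := legendre hp (p ^ (n - 1))
    rwa [digits_sum_pow hp.two_le] at this
  have h2 : (p - 1) * b + 1 = p ^ n := by
    have := legendre hp (p ^ n)
    rwa [digits_sum_pow hp.two_le] at this
  have hpow : p * p ^ (n - 1) = p ^ n := by
    rw [← pow_succ']
    congr 1
    omega
  have h3 : p * ((p - 1) * a) + p = p ^ n := by
    rw [← hpow, ← h1]
    ring
  have h4 : p * ((p - 1) * a) = (p - 1) * (p * a) := by ring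
  rw [h4] at h3
  -- (p-1) * (p*a+1) = (p-1) * b
  have h5 : (p - 1) * (p * a + 1) = (p - 1) * b := by
    have e1 : (p - 1) * (p * a + 1) = (p - 1) * (p * a) + (p - 1) := by ring
    have := hp.two_le
    omega
  exact Nat.eq_of_mul_eq_mul_left (by have := hp.two_le; omega) h5

end Normality

section Sym

variable {p n : ℕ}

lemma ofSubtype_inj {α : Type*} [Fintype α] [DecidableEq α] {pr : α → Prop} [DecidablePred pr] :
    Function.Injective (Perm.ofSubtype : Perm (Subtype pr) →* Perm α) := by
  intro f g h
  ext x
  have h1 : Perm.ofSubtype f (x : α) = Perm.ofSubtype g (x : α) := by rw [h]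
  rw [Perm.ofSubtype_apply_coe, Perm.ofSubtype_apply_coe] at h1
  exact h1

lemma exists_form (hp : p.Prime) (hn : 1 ≤ n) :
    ∃ H : Subgroup (Perm (Fin (p ^ n))), IsSylowProductForm p n H ∧
      Nat.card H = p ^ (p * ((p ^ (n - 1)).factorial.factorization p)) := by
  classical
  haveI : Fact p.Prime := ⟨hp⟩
  have hpq : p * p ^ (n - 1) = p ^ n := by
    rw [← pow_succ']; congr 1; omega
  let e : Fin p × Fin (p ^ (n - 1)) ≃ Fin (p ^ n) := finProdFinEquiv.trans (finCongr hpq)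
  set N : Fin p → Finset (Fin (p ^ n)) := fun i => Finset.univ.image (fun x => e (i, x)) with hN
  have hmemN : ∀ (i) (z : Fin (p ^ n)), z ∈ N i ↔ (e.symm z).1 = i := by
    intro i z
    simp only [hN, Finset.mem_image, Finset.mem_univ, true_and]
    constructor
    · rintro ⟨x, rfl⟩; simp
    · intro h
      refine ⟨(e.symm z).2, ?_⟩
      conv_rhs => rw [← e.apply_symm_apply z]
      rw [← h]
  have hdisj : ∀ i j, i ≠ j → Disjoint (N i) (N j) := by
    intro i j hij
    rw [Finset.disjoint_left]
    intro z hzi hzj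
    rw [hmemN] at hzi hzj
    exact hij (by rw [← hzi, ← hzj])
  have hcov : ∀ z : Fin (p ^ n), ∃ i, z ∈ N i := fun z => ⟨(e.symm z).1, (hmemN _ _).mpr rfl⟩
  have hcard : ∀ i, (N i).card = p ^ (n - 1) := by
    intro i
    rw [hN]
    rw [Finset.card_image_of_injective _ (fun x y hxy => by
      have := e.injective hxy
      exact (Prod.mk.injEq _ _ _ _).mp this |>.2)]
    simp
  let R : ∀ i : Fin p, Sylow p (Perm {z // z ∈ N i}) := fun _ => Classical.arbitrary _
  set Q : Fin p → Subgroup (Perm (Fin (p ^ n))) :=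
    fun i => Subgroup.map Perm.ofSubtype (R i).toSubgroup with hQ
  have hsupp : ∀ i, ∀ g ∈ Q i, ∀ x : Fin (p ^ n), x ∉ N i → g x = x := by
    intro i g hg x hx
    obtain ⟨f, _, rfl⟩ := hg
    exact Perm.ofSubtype_apply_of_not_mem f hx
  have hpg : ∀ i, IsPGroup p (Q i) := fun i => (R i).isPGroup'.map _
  have hQcard : ∀ i, Nat.card (Q i) = p ^ ((p ^ (n - 1)).factorial.factorization p) := by
    intro i
    have h1 : Nat.card (Q i) = Nat.card (R i) :=
      (Nat.card_congr (Subgroup.equivMapOfInjective _ _ ofSubtype_inj).toEquiv).symm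
    rw [h1, Sylow.card_eq_multiplicity]
    congr 2
    rw [Nat.card_eq_fintype_card, Fintype.card_perm, Fintype.card_coe, hcard i]
  refine ⟨⨆ i, Q i, ⟨N, hdisj, ?_, hcard, Q, hsupp, hpg, hQcard, rfl⟩, ?_⟩
  · refine Finset.eq_univ_iff_forall.mpr fun z => ?_
    obtain ⟨i, hi⟩ := hcov z
    exact Finset.mem_biUnion.mpr ⟨i, Finset.mem_univ i, hi⟩
  · rw [card_iSup_eq hdisj hsupp hQcard, Fintype.card_fin]

lemma form_conj (hp : p.Prime) {H : Subgroup (Perm (Fin (p ^ n)))}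
    (hf : IsSylowProductForm p n H) (g : Perm (Fin (p ^ n))) :
    IsSylowProductForm p n (Subgroup.map (MulAut.conj g).toMonoidHom H) := by
  classical
  obtain ⟨N, hdisj, hbiU, hcard, Q, hsupp, hpg, hQcard, rfl⟩ := hf
  have hcovN : ∀ z : Fin (p ^ n), ∃ i, z ∈ N i := by
    intro z
    have : z ∈ Finset.univ.biUnion N := by rw [hbiU]; exact Finset.mem_univ z
    obtain ⟨i, _, hi⟩ := Finset.mem_biUnion.mp this
    exact ⟨i, hi⟩
  refine ⟨fun i => (N i).image g, ?_, ?_, ?_,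
    fun i => Subgroup.map (MulAut.conj g).toMonoidHom (Q i), ?_, ?_, ?_, ?_⟩
  · intro i j hij
    rw [Finset.disjoint_left]
    intro z hzi hzj
    obtain ⟨x, hx, rfl⟩ := Finset.mem_image.mp hzi
    obtain ⟨y, hy, hyx⟩ := Finset.mem_image.mp hzj
    have : y = x := g.injective hyx
    rw [this] at hy
    exact (hdisj i j hij).forall_ne_finset hx hy rfl
  · refine Finset.eq_univ_iff_forall.mpr fun z => ?_
    obtain ⟨i, hi⟩ := hcovN (g⁻¹ z)
    refine Finset.mem_biUnion.mpr ⟨i, Finset.mem_univ i, Finset.mem_image.mpr ⟨g⁻¹ z, hi, by simp⟩⟩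
  · intro i
    rw [Finset.card_image_of_injective _ g.injective]
    exact hcard i
  · intro i h hh x hx
    obtain ⟨h₀, hh₀, rfl⟩ := hh
    have hgx : g⁻¹ x ∉ N i := by
      intro hmem
      exact hx (Finset.mem_image.mpr ⟨g⁻¹ x, hmem, by simp⟩)
    show (MulAut.conj g h₀) x = x
    rw [MulAut.conj_apply]
    simp only [Perm.mul_apply]
    rw [hsupp i h₀ hh₀ _ hgx]
    simp
  · exact fun i => (hpg i).map _
  · intro i
    have h1 : Nat.card (Subgroup.map (MulAut.conj g).toMonoidHom (Q i)) = Nat.card (Q i) :=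
      (Nat.card_congr (Subgroup.equivMapOfInjective _ _ (MulAut.conj g).injective).toEquiv).symm
    rw [h1]
    exact hQcard i
  · rw [Subgroup.map_iSup]

end Sym

section Unique

variable {p n : ℕ}

lemma card_sylow (hp : p.Prime) (P : Sylow p (Perm (Fin (p ^ n)))) :
    Nat.card P = p ^ ((p ^ n).factorial.factorization p) := by
  haveI : Fact p.Prime := ⟨hp⟩
  rw [Sylow.card_eq_multiplicity]
  congr 2
  rw [Nat.card_eq_fintype_card, Fintype.card_perm, Fintype.card_fin]

lemma b_pos (hp : p.Prime) (hn : 1 ≤ n) : 1 ≤ (p ^ n).factorial.factorization p := by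
  have hb := legendre hp (p ^ n)
  rw [digits_sum_pow hp.two_le] at hb
  have hpn : p ≤ p ^ n := Nat.le_self_pow (by omega) p
  have := hp.two_le
  rcases Nat.eq_zero_or_pos ((p ^ n).factorial.factorization p) with h | h
  · rw [h, Nat.mul_zero] at hb; omega
  · exact h

lemma card_of_le_index (hp : p.Prime) (hn : 1 ≤ n) (P : Sylow p (Perm (Fin (p ^ n))))
    {H : Subgroup (Perm (Fin (p ^ n)))} (hH : H ≤ ↑P)
    (hidx : (H.subgroupOf ↑P).index = p) :
    Nat.card H = p ^ ((p ^ n).factorial.factorization p - 1) := by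
  haveI : Fact p.Prime := ⟨hp⟩
  set b := (p ^ n).factorial.factorization p with hb
  have hble : 1 ≤ b := b_pos hp hn
  have h1 := Subgroup.index_mul_card (H.subgroupOf (P : Subgroup (Perm (Fin (p ^ n)))))
  rw [hidx, Nat.card_congr (Subgroup.subgroupOfEquivOfLe hH).toEquiv, card_sylow hp P] at h1
  have h2 : p ^ b = p * p ^ (b - 1) := by
    rw [← pow_succ']
    congr 1
    omega
  rw [h2] at h1
  exact Nat.eq_of_mul_eq_mul_left hp.pos h1

lemma index_of_card (hp : p.Prime) (hn : 1 ≤ n) (P : Sylow p (Perm (Fin (p ^ n))))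
    {H : Subgroup (Perm (Fin (p ^ n)))} (hH : H ≤ ↑P)
    (hcard : Nat.card H = p ^ ((p ^ n).factorial.factorization p - 1)) :
    (H.subgroupOf ↑P).index = p := by
  haveI : Fact p.Prime := ⟨hp⟩
  set b := (p ^ n).factorial.factorization p with hb
  have hble : 1 ≤ b := b_pos hp hn
  have h1 := Subgroup.index_mul_card (H.subgroupOf (P : Subgroup (Fin (p ^ n) ≃ Fin (p ^ n))))
  rw [Nat.card_congr (Subgroup.subgroupOfEquivOfLe hH).toEquiv, hcard, card_sylow hp P] at h1
  have h2 : p ^ b = p * p ^ (b - 1) := by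
    rw [← pow_succ']
    congr 1
    omega
  rw [h2] at h1
  have hpos : 0 < p ^ (b - 1) := pow_pos hp.pos _
  have h3 : (H.subgroupOf ↑P).index * p ^ (b - 1) = p * p ^ (b - 1) := h1
  exact Nat.eq_of_mul_eq_mul_right hpos h3

/-- A Sylow subgroup of the symmetric group on `p^n` points is transitive. -/
lemma sylow_trans (hp : p.Prime) (hn : 1 ≤ n) (P : Sylow p (Perm (Fin (p ^ n))))
    (x y : Fin (p ^ n)) : ∃ g ∈ (P : Subgroup (Perm (Fin (p ^ n)))), g x = y := by
  classical
  haveI : Fact p.Prime := ⟨hp⟩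
  by_contra hcon
  push_neg at hcon
  set O : Finset (Fin (p ^ n)) :=
    Finset.univ.filter (fun z => ∃ g ∈ (P : Subgroup (Perm (Fin (p ^ n)))), g x = z) with hO
  have hxO : x ∈ O := by
    refine Finset.mem_filter.mpr ⟨Finset.mem_univ x, 1, Subgroup.one_mem _, ?_⟩
    simp
  have hyO : y ∉ O := by
    intro hy
    obtain ⟨-, g, hg, hgx⟩ := Finset.mem_filter.mp hy
    exact hcon g hg hgx
  set M : Bool → Finset (Fin (p ^ n)) := fun b => cond b O (Finset.univ \ O) with hM
  have hMdisj : ∀ i j, i ≠ j → Disjoint (M i) (M j) := by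
    intro i j hij
    rcases i <;> rcases j <;> simp only [hM, cond_true, cond_false] at *
    · exact absurd rfl hij
    · exact Finset.sdiff_disjoint
    · exact Finset.disjoint_sdiff
    · exact absurd rfl hij
  have hMcov : ∀ z : Fin (p ^ n), ∃ i, z ∈ M i := by
    intro z
    by_cases hz : z ∈ O
    · exact ⟨true, by simpa [hM, cond_true]⟩
    · exact ⟨false, by simp [hM, cond_false, hz]⟩
  have hMpres : ∀ g ∈ (P : Subgroup (Perm (Fin (p ^ n)))), ∀ i, ∀ z ∈ M i, g z ∈ M i := by
    have horb : ∀ g ∈ (P : Subgroup (Perm (Fin (p ^ n)))), ∀ z ∈ O, g z ∈ O := by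
      intro g hg z hz
      obtain ⟨-, h, hh, hhx⟩ := Finset.mem_filter.mp hz
      refine Finset.mem_filter.mpr ⟨Finset.mem_univ _, g * h, Subgroup.mul_mem _ hg hh, ?_⟩
      simp [Perm.mul_apply, hhx]
    intro g hg i z hz
    rcases i
    · simp only [hM, cond_false] at hz ⊢
      rw [Finset.mem_sdiff] at hz ⊢
      refine ⟨Finset.mem_univ _, fun hgz => hz.2 ?_⟩
      obtain ⟨-, h, hh, hhx⟩ := Finset.mem_filter.mp hgz
      refine Finset.mem_filter.mpr ⟨Finset.mem_univ _, g⁻¹ * h, Subgroup.mul_mem _ (Subgroup.inv_mem _ hg) hh, ?_⟩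
      simp [Perm.mul_apply, hhx]
    · simp only [hM, cond_true] at hz ⊢
      exact horb g hg z hz
  have hexp := pgroup_exp_le hp M hMcov (P : Subgroup (Perm (Fin (p ^ n)))) hMpres
    (card_sylow hp P)
  have hLP := legendre_partition hp M hMdisj hMcov
  rw [Fintype.card_fin] at hLP
  have hb := legendre hp (p ^ n)
  rw [digits_sum_pow hp.two_le] at hb
  -- digit sums of the two nonempty parts
  have hS : 2 ≤ ∑ i, (Nat.digits p ((M i).card)).sum := by
    have h1 : ∀ i, 1 ≤ (Nat.digits p ((M i).card)).sum := by
      intro i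
      apply digits_sum_pos hp.two_le
      rw [Finset.card_pos]
      rcases i
      · exact ⟨y, by simp [hM, cond_false, Finset.mem_sdiff, hyO]⟩
      · exact ⟨x, by simpa [hM, cond_true] using hxO⟩
    calc (2 : ℕ) = ∑ _i : Bool, 1 := by simp
    _ ≤ _ := Finset.sum_le_sum fun i _ => h1 i
  set T := ∑ i, (((M i).card).factorial).factorization p with hT
  set S := ∑ i, (Nat.digits p ((M i).card)).sum with hSd
  have hmono : (p - 1) * ((p ^ n).factorial.factorization p) ≤ (p - 1) * T :=
    Nat.mul_le_mul_left _ hexp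
  have := hp.two_le
  omega

end Unique

section Unique2

set_option linter.unusedVariables false

variable {p n : ℕ}

/-- A product-form subgroup of full Sylow-minus-one order is transitive on each block. -/
lemma form_trans (hp : p.Prime) (hn : 1 ≤ n)
    {H : Subgroup (Perm (Fin (p ^ n)))} {N : Fin p → Finset (Fin (p ^ n))}
    (hdisj : ∀ i j, i ≠ j → Disjoint (N i) (N j))
    (hcov : ∀ z : Fin (p ^ n), ∃ i, z ∈ N i)
    (hcardN : ∀ i, (N i).card = p ^ (n - 1))
    (hpres : ∀ g ∈ H, ∀ i, ∀ x ∈ N i, g x ∈ N i)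
    (hcardH : Nat.card H = p ^ ((p ^ n).factorial.factorization p - 1)) :
    ∀ i, ∀ x ∈ N i, ∀ y ∈ N i, ∃ h ∈ H, h x = y := by
  classical
  intro i x hx y hy
  by_contra hcon
  push_neg at hcon
  set O : Finset (Fin (p ^ n)) := (N i).filter (fun z => ∃ h ∈ H, h x = z) with hO
  have hxO : x ∈ O := by
    refine Finset.mem_filter.mpr ⟨hx, 1, Subgroup.one_mem _, ?_⟩
    simp
  have hyO : y ∉ O := by
    intro hy'
    obtain ⟨-, h, hh, hhx⟩ := Finset.mem_filter.mp hy'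
    exact hcon h hh hhx
  have hOsub : O ⊆ N i := Finset.filter_subset _ _
  set M : Option (Fin p) → Finset (Fin (p ^ n)) :=
    fun o => Option.rec ((N i) \ O) (fun j => if j = i then O else N j) o with hM
  have hMnone : M none = (N i) \ O := rfl
  have hMsome : ∀ j, M (some j) = if j = i then O else N j := fun j => rfl
  have hMdisj : ∀ o₁ o₂, o₁ ≠ o₂ → Disjoint (M o₁) (M o₂) := by
    have key : ∀ j, Disjoint (M none) (M (some j)) := by
      intro j
      rw [hMnone, hMsome]
      rcases eq_or_ne j i with rfl | hne
      · rw [if_pos rfl]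
        exact Finset.sdiff_disjoint
      · rw [if_neg hne]
        exact Finset.disjoint_of_subset_left (Finset.sdiff_subset) (hdisj i j (Ne.symm hne))
    intro o₁ o₂ ho
    match o₁, o₂ with
    | none, none => exact absurd rfl ho
    | none, some j => exact key j
    | some j, none => exact (key j).symm
    | some j, some k =>
        have hjk : j ≠ k := fun h => ho (by rw [h])
        rw [hMsome, hMsome]
        rcases eq_or_ne j i with rfl | hne
        · rw [if_pos rfl, if_neg (Ne.symm hjk)]
          exact Finset.disjoint_of_subset_left hOsub (hdisj j k hjk)
        · rw [if_neg hne]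
          rcases eq_or_ne k i with rfl | hne2
          · rw [if_pos rfl]
            exact Finset.disjoint_of_subset_right hOsub (hdisj j k hjk)
          · rw [if_neg hne2]
            exact hdisj j k hjk
  have hMcov : ∀ z : Fin (p ^ n), ∃ o, z ∈ M o := by
    intro z
    obtain ⟨j, hj⟩ := hcov z
    rcases eq_or_ne j i with rfl | hne
    · by_cases hz : z ∈ O
      · exact ⟨some j, by rw [hMsome, if_pos rfl]; exact hz⟩
      · exact ⟨none, by rw [hMnone]; exact Finset.mem_sdiff.mpr ⟨hj, hz⟩⟩
    · exact ⟨some j, by rw [hMsome, if_neg hne]; exact hj⟩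
  have horb : ∀ g ∈ H, ∀ z ∈ O, g z ∈ O := by
    intro g hg z hz
    obtain ⟨hzN, h, hh, hhx⟩ := Finset.mem_filter.mp hz
    refine Finset.mem_filter.mpr ⟨hpres g hg i z hzN, g * h, Subgroup.mul_mem _ hg hh, ?_⟩
    simp [Perm.mul_apply, hhx]
  have hMpres : ∀ g ∈ H, ∀ o, ∀ z ∈ M o, g z ∈ M o := by
    intro g hg o z hz
    match o with
    | none =>
        rw [hMnone] at hz ⊢
        rw [Finset.mem_sdiff] at hz ⊢
        refine ⟨hpres g hg i z hz.1, fun hgz => hz.2 ?_⟩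
        obtain ⟨hzN, h, hh, hhx⟩ := Finset.mem_filter.mp hgz
        refine Finset.mem_filter.mpr ⟨hz.1, g⁻¹ * h,
          Subgroup.mul_mem _ (Subgroup.inv_mem _ hg) hh, ?_⟩
        simp [Perm.mul_apply, hhx]
    | some j =>
        rw [hMsome] at hz ⊢
        rcases eq_or_ne j i with rfl | hne
        · rw [if_pos rfl] at hz ⊢
          exact horb g hg z hz
        · rw [if_neg hne] at hz ⊢
          exact hpres g hg j z hz
  have hexp := pgroup_exp_le hp M hMcov H hMpres hcardH
  have hLP := legendre_partition hp M hMdisj hMcov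
  rw [Fintype.card_fin] at hLP
  have hb := legendre hp (p ^ n)
  rw [digits_sum_pow hp.two_le] at hb
  set b := (p ^ n).factorial.factorization p with hbdef
  have hble : 1 ≤ b := b_pos hp hn
  -- each part is nonempty
  have hS : p + 1 ≤ ∑ o, (Nat.digits p ((M o).card)).sum := by
    have h1 : ∀ o, 1 ≤ (Nat.digits p ((M o).card)).sum := by
      intro o
      apply digits_sum_pos hp.two_le
      rw [Finset.card_pos]
      match o with
      | none => exact ⟨y, by rw [hMnone]; exact Finset.mem_sdiff.mpr ⟨hy, hyO⟩⟩
      | some j =>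
          rw [hMsome]
          rcases eq_or_ne j i with rfl | hne
          · rw [if_pos rfl]; exact ⟨x, hxO⟩
          · rw [if_neg hne]
            rw [← Finset.card_pos, hcardN]
            exact pow_pos hp.pos _
    calc p + 1 = ∑ _o : Option (Fin p), 1 := by
          simp [Fintype.card_option, Fintype.card_fin]
    _ ≤ _ := Finset.sum_le_sum fun o _ => h1 o
  set T := ∑ o, (((M o).card).factorial).factorization p with hT
  set S := ∑ o, (Nat.digits p ((M o).card)).sum with hSd
  have hmono : (p - 1) * (b - 1) ≤ (p - 1) * T := Nat.mul_le_mul_left _ hexp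
  have hmul : (p - 1) * (b - 1) + (p - 1) = (p - 1) * b := by
    have h2 : b - 1 + 1 = b := by omega
    calc (p - 1) * (b - 1) + (p - 1) = (p - 1) * (b - 1 + 1) := by ring
    _ = (p - 1) * b := by rw [h2]
  have := hp.two_le
  omega

/-- Normality transfer from `subgroupOf` index `p`. -/
lemma form_normal (hp : p.Prime) (P : Sylow p (Perm (Fin (p ^ n))))
    {H : Subgroup (Perm (Fin (p ^ n)))} (hH : H ≤ ↑P)
    (hidx : (H.subgroupOf ↑P).index = p) :
    ∀ g ∈ (P : Subgroup (Perm (Fin (p ^ n)))), ∀ h ∈ H, g * h * g⁻¹ ∈ H := by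
  haveI : Fact p.Prime := ⟨hp⟩
  have hnormal : (H.subgroupOf (P : Subgroup (Perm (Fin (p ^ n))))).Normal :=
    normal_of_index_prime hp P.isPGroup' hidx
  intro g hg h hh
  have h1 : (⟨h, hH hh⟩ : ↥(P : Subgroup (Perm (Fin (p ^ n))))) ∈ H.subgroupOf ↑P := by
    rw [Subgroup.mem_subgroupOf]
    exact hh
  have h2 := hnormal.conj_mem _ h1 ⟨g, hg⟩
  rw [Subgroup.mem_subgroupOf] at h2
  exact h2

lemma block_image (hp : p.Prime)
    {H : Subgroup (Perm (Fin (p ^ n)))} {N : Fin p → Finset (Fin (p ^ n))}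
    (hcardN : ∀ i, (N i).card = p ^ (n - 1))
    (hpres : ∀ g ∈ H, ∀ i, ∀ x ∈ N i, g x ∈ N i)
    (htrans : ∀ i, ∀ x ∈ N i, ∀ y ∈ N i, ∃ h ∈ H, h x = y)
    {PP : Subgroup (Perm (Fin (p ^ n)))}
    (hnorm : ∀ g ∈ PP, ∀ h ∈ H, g * h * g⁻¹ ∈ H)
    {g : Perm (Fin (p ^ n))} (hg : g ∈ PP) {i j : Fin p} {x : Fin (p ^ n)}
    (hx : x ∈ N i) (hgx : g x ∈ N j) :
    (N i).image g = N j := by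
  classical
  apply Finset.eq_of_subset_of_card_le
  · intro z hz
    obtain ⟨w, hw, rfl⟩ := Finset.mem_image.mp hz
    obtain ⟨h, hh, hhw⟩ := htrans i x hx w hw
    have hcalc : g w = (g * h * g⁻¹) (g x) := by
      simp [Perm.mul_apply, hhw]
    rw [hcalc]
    exact hpres _ (hnorm g hg h hh) j _ hgx
  · rw [Finset.card_image_of_injective _ g.injective, hcardN, hcardN]

end Unique2

section Unique3

set_option linter.unusedVariables false

variable {p n : ℕ}

lemma eq_inf_of_pres (hp : p.Prime) (hn : 1 ≤ n) (P : Sylow p (Perm (Fin (p ^ n))))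
    {K : Subgroup (Perm (Fin (p ^ n)))} {N : Fin p → Finset (Fin (p ^ n))}
    (hdisj : ∀ i j, i ≠ j → Disjoint (N i) (N j))
    (hcov : ∀ z : Fin (p ^ n), ∃ i, z ∈ N i)
    (hcardN : ∀ i, (N i).card = p ^ (n - 1))
    (hKle : K ≤ ↑P) (hKpres : K ≤ ⨅ i, presSG (N i))
    (hcardK : Nat.card K = p ^ ((p ^ n).factorial.factorization p - 1)) :
    K = (↑P : Subgroup (Perm (Fin (p ^ n)))) ⊓ ⨅ i, presSG (N i) := by
  classical
  haveI : Fact p.Prime := ⟨hp⟩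
  set b := (p ^ n).factorial.factorization p with hbdef
  have hpa : p * ((p ^ (n - 1)).factorial.factorization p) = b - 1 := by
    have := key_arith hp hn
    omega
  set W := (↑P : Subgroup (Perm (Fin (p ^ n)))) ⊓ ⨅ i, presSG (N i) with hW
  have hWpres : ∀ g ∈ W, ∀ i, ∀ x ∈ N i, g x ∈ N i := by
    intro g hg i x hx
    exact (Subgroup.mem_iInf.mp hg.2 i) x hx
  have hWpg : IsPGroup p W := P.isPGroup'.to_le inf_le_left
  obtain ⟨w, hw⟩ := IsPGroup.iff_card.mp hWpg
  have hwle : w ≤ b - 1 := by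
    have hexp := pgroup_exp_le hp N hcov W hWpres hw
    have hsum : ∑ i : Fin p, (((N i).card).factorial).factorization p
        = p * ((p ^ (n - 1)).factorial.factorization p) := by
      rw [Finset.sum_congr rfl fun i _ => by rw [hcardN i]]
      rw [Finset.sum_const, Finset.card_univ, Fintype.card_fin, smul_eq_mul]
    omega
  have hKleW : K ≤ W := le_inf hKle hKpres
  have hcw : Nat.card K ∣ Nat.card W := Subgroup.card_dvd_of_le hKleW
  rw [hcardK, hw] at hcw
  have hble2 : b - 1 ≤ w := (Nat.pow_dvd_pow_iff_le_right hp.one_lt).mp hcw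
  have hweq : w = b - 1 := le_antisymm hwle hble2
  have h1 : Nat.card (K.subgroupOf W) = Nat.card W := by
    rw [Nat.card_congr (Subgroup.subgroupOfEquivOfLe hKleW).toEquiv, hcardK, hw, hweq]
  have h2 : K.subgroupOf W = ⊤ := (Subgroup.card_eq_iff_eq_top _).mp h1
  exact le_antisymm hKleW (Subgroup.subgroupOf_eq_top.mp h2)

lemma forms_eq (hp : p.Prime) (hn : 1 ≤ n) (P : Sylow p (Perm (Fin (p ^ n))))
    {H H' : Subgroup (Perm (Fin (p ^ n)))}
    (hH : H ≤ ↑P) (hidx : (H.subgroupOf ↑P).index = p) (hf : IsSylowProductForm p n H)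
    (hH' : H' ≤ ↑P) (hidx' : (H'.subgroupOf ↑P).index = p) (hf' : IsSylowProductForm p n H') :
    H = H' := by
  classical
  haveI : Fact p.Prime := ⟨hp⟩
  set b := (p ^ n).factorial.factorization p with hbdef
  obtain ⟨N, hdisj, hbiU, hcardN, Q, hsupp, hpg, hQcard, hHQ⟩ := hf
  obtain ⟨N', hdisj', hbiU', hcardN', Q', hsupp', hpg', hQcard', hHQ'⟩ := hf'
  have hcov : ∀ z : Fin (p ^ n), ∃ i, z ∈ N i := by
    intro z
    have : z ∈ Finset.univ.biUnion N := by rw [hbiU]; exact Finset.mem_univ z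
    obtain ⟨i, -, hi⟩ := Finset.mem_biUnion.mp this
    exact ⟨i, hi⟩
  have hcov' : ∀ z : Fin (p ^ n), ∃ i, z ∈ N' i := by
    intro z
    have : z ∈ Finset.univ.biUnion N' := by rw [hbiU']; exact Finset.mem_univ z
    obtain ⟨i, -, hi⟩ := Finset.mem_biUnion.mp this
    exact ⟨i, hi⟩
  have hpres : ∀ g ∈ H, ∀ i, ∀ x ∈ N i, g x ∈ N i := by
    intro g hg i x hx
    rw [hHQ] at hg
    exact (iSup_le_presSG hdisj hsupp i) hg x hx
  have hpres' : ∀ g ∈ H', ∀ i, ∀ x ∈ N' i, g x ∈ N' i := by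
    intro g hg i x hx
    rw [hHQ'] at hg
    exact (iSup_le_presSG hdisj' hsupp' i) hg x hx
  have hcardH : Nat.card H = p ^ (b - 1) := card_of_le_index hp hn P hH hidx
  have hcardH' : Nat.card H' = p ^ (b - 1) := card_of_le_index hp hn P hH' hidx'
  have htrans := form_trans hp hn hdisj hcov hcardN hpres hcardH
  have htrans' := form_trans hp hn hdisj' hcov' hcardN' hpres' hcardH'
  have hnorm := form_normal hp P hH hidx
  have hnorm' := form_normal hp P hH' hidx'
  by_cases hsame : ∀ i, ∃ j, N i = N' j
  · -- the two partitions agree, both subgroups equal `P ⊓ ⨅ presSG (N i)`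
    have hKpres : H ≤ ⨅ i, presSG (N i) := by
      rw [hHQ]
      exact le_iInf fun i => iSup_le_presSG hdisj hsupp i
    have hKpres' : H' ≤ ⨅ i, presSG (N i) := by
      refine le_iInf fun i => ?_
      obtain ⟨j, hj⟩ := hsame i
      rw [hj, hHQ']
      exact iSup_le_presSG hdisj' hsupp' j
    rw [eq_inf_of_pres hp hn P hdisj hcov hcardN hH hKpres hcardH,
      eq_inf_of_pres hp hn P hdisj hcov hcardN hH' hKpres' hcardH']
  · -- impossible: the common refinement has at least 2p parts
    exfalso
    push_neg at hsame
    obtain ⟨i0, hi0⟩ := hsame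
    have hBne : (N i0).Nonempty := by
      rw [← Finset.card_pos, hcardN]
      exact pow_pos hp.pos _
    obtain ⟨x, hx⟩ := hBne
    have hxj0 : x ∈ N' (hcov' x).choose := (hcov' x).choose_spec
    set j0 := (hcov' x).choose with hj0
    set c := (N i0 ∩ N' j0).card with hc
    have hxc : x ∈ N i0 ∩ N' j0 := Finset.mem_inter.mpr ⟨hx, hxj0⟩
    have hc1 : 1 ≤ c := Finset.card_pos.mpr ⟨x, hxc⟩
    have hclt : c < p ^ (n - 1) := by
      rcases lt_or_ge c (p ^ (n - 1)) with h | h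
      · exact h
      · exfalso
        have hsub : N i0 ∩ N' j0 ⊆ N i0 := Finset.inter_subset_left
        have h2 : N i0 ∩ N' j0 = N i0 := by
          apply Finset.eq_of_subset_of_card_le hsub
          rw [hcardN]
          exact h
        have hsub2 : N i0 ⊆ N' j0 := by
          intro z hz
          have : z ∈ N i0 ∩ N' j0 := by rw [h2]; exact hz
          exact (Finset.mem_inter.mp this).2
        have : N i0 = N' j0 := by
          apply Finset.eq_of_subset_of_card_le hsub2
          rw [hcardN, hcardN']
        exact hi0 j0 this
    have huniq : ∀ (z : Fin (p ^ n)) (i : Fin p), z ∈ N i → i = (hcov z).choose := by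
      intro z i hzi
      by_contra hne
      exact (hdisj i _ hne).forall_ne_finset hzi (hcov z).choose_spec rfl
    have huniq' : ∀ (z : Fin (p ^ n)) (j : Fin p), z ∈ N' j → j = (hcov' z).choose := by
      intro z j hzj
      by_contra hne
      exact (hdisj' j _ hne).forall_ne_finset hzj (hcov' z).choose_spec rfl
    have hcell : ∀ y : Fin (p ^ n), (N ((hcov y).choose) ∩ N' ((hcov' y).choose)).card = c := by
      intro y
      obtain ⟨g, hg, hgx⟩ := sylow_trans hp hn P x y
      have h1 : (N i0).image g = N ((hcov y).choose) :=
        block_image hp hcardN hpres htrans hnorm hg hx (by rw [hgx]; exact (hcov y).choose_spec)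
      have h2 : (N' j0).image g = N' ((hcov' y).choose) :=
        block_image hp hcardN' hpres' htrans' hnorm' hg hxj0
          (by rw [hgx]; exact (hcov' y).choose_spec)
      rw [← h1, ← h2, ← Finset.image_inter _ _ g.injective,
        Finset.card_image_of_injective _ g.injective]
    set M : Fin p × Fin p → Finset (Fin (p ^ n)) := fun ij => N ij.1 ∩ N' ij.2 with hM
    have hcellcard : ∀ ij : Fin p × Fin p, (M ij).Nonempty → (M ij).card = c := by
      rintro ⟨i, j⟩ ⟨z, hz⟩
      obtain ⟨hz1, hz2⟩ := Finset.mem_inter.mp hz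
      have e1 : i = (hcov z).choose := huniq z i hz1
      have e2 : j = (hcov' z).choose := huniq' z j hz2
      show (N i ∩ N' j).card = c
      rw [e1, e2]
      exact hcell z
    have hrow : ∀ i : Fin p, ∃ j1 j2 : Fin p, j1 ≠ j2 ∧
        (M (i, j1)).Nonempty ∧ (M (i, j2)).Nonempty := by
      intro i
      have hNe : (N i).Nonempty := by
        rw [← Finset.card_pos, hcardN]
        exact pow_pos hp.pos _
      obtain ⟨y, hy⟩ := hNe
      have hyc : y ∈ M (i, (hcov' y).choose) :=
        Finset.mem_inter.mpr ⟨hy, (hcov' y).choose_spec⟩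
      have hcc : (M (i, (hcov' y).choose)).card = c := hcellcard _ ⟨y, hyc⟩
      have hex : ∃ z ∈ N i, z ∉ M (i, (hcov' y).choose) := by
        by_contra hcontra
        push_neg at hcontra
        have hsub : N i ⊆ M (i, (hcov' y).choose) := hcontra
        have := Finset.card_le_card hsub
        rw [hcardN, hcc] at this
        omega
      obtain ⟨z, hzN, hznot⟩ := hex
      refine ⟨(hcov' y).choose, (hcov' z).choose, ?_, ⟨y, hyc⟩,
        ⟨z, Finset.mem_inter.mpr ⟨hzN, (hcov' z).choose_spec⟩⟩⟩
      intro heq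
      apply hznot
      refine Finset.mem_inter.mpr ⟨hzN, ?_⟩
      rw [heq]
      exact (hcov' z).choose_spec
    set D := H ⊓ H' with hD
    have hDpres : ∀ g ∈ D, ∀ ij, ∀ z ∈ M ij, g z ∈ M ij := by
      rintro g hg ⟨i, j⟩ z hz
      obtain ⟨hz1, hz2⟩ := Finset.mem_inter.mp hz
      exact Finset.mem_inter.mpr ⟨hpres g hg.1 i z hz1, hpres' g hg.2 j z hz2⟩
    have hMcov : ∀ z : Fin (p ^ n), ∃ ij, z ∈ M ij := fun z =>
      ⟨((hcov z).choose, (hcov' z).choose),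
        Finset.mem_inter.mpr ⟨(hcov z).choose_spec, (hcov' z).choose_spec⟩⟩
    have hMdisj : ∀ ij kl : Fin p × Fin p, ij ≠ kl → Disjoint (M ij) (M kl) := by
      rintro ⟨i, j⟩ ⟨k, l⟩ hne
      rw [Finset.disjoint_left]
      intro z hz1 hz2
      obtain ⟨hzi, hzj⟩ := Finset.mem_inter.mp hz1
      obtain ⟨hzk, hzl⟩ := Finset.mem_inter.mp hz2
      have e1 : i = k := by rw [huniq z i hzi, huniq z k hzk]
      have e2 : j = l := by rw [huniq' z j hzj, huniq' z l hzl]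
      exact hne (by rw [e1, e2])
    have hDle : D ≤ (↑P : Subgroup (Perm (Fin (p ^ n)))) := le_trans inf_le_left hH
    have hDpg : IsPGroup p D := P.isPGroup'.to_le hDle
    obtain ⟨d, hd⟩ := IsPGroup.iff_card.mp hDpg
    have hbd : b ≤ d + 2 := by
      have h1 : (H.subgroupOf ↑P ⊓ H'.subgroupOf ↑P).index ≤ p * p := by
        calc (H.subgroupOf (P : Subgroup (Perm (Fin (p ^ n)))) ⊓ H'.subgroupOf ↑P).index
            ≤ (H.subgroupOf ↑P).index * (H'.subgroupOf ↑P).index := Subgroup.index_inf_le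
        _ = p * p := by rw [hidx, hidx']
      have h2 : H.subgroupOf (P : Subgroup (Perm (Fin (p ^ n)))) ⊓ H'.subgroupOf ↑P
          = D.subgroupOf ↑P := (Subgroup.comap_inf _ _ _).symm
      rw [h2] at h1
      have h3 := Subgroup.index_mul_card (D.subgroupOf (P : Subgroup (Perm (Fin (p ^ n)))))
      rw [Nat.card_congr (Subgroup.subgroupOfEquivOfLe hDle).toEquiv, hd, card_sylow hp P] at h3
      have h4 : p ^ b ≤ p ^ (d + 2) := by
        calc p ^ b = (D.subgroupOf ↑P).index * p ^ d := h3.symm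
        _ ≤ (p * p) * p ^ d := Nat.mul_le_mul_right _ h1
        _ = p ^ (d + 2) := by ring
      exact (Nat.pow_le_pow_iff_right hp.one_lt).mp h4
    have hexp := pgroup_exp_le hp M hMcov D hDpres hd
    have hLP := legendre_partition hp M hMdisj hMcov
    rw [Fintype.card_fin] at hLP
    have hS : 2 * p ≤ ∑ ij, (Nat.digits p ((M ij).card)).sum := by
      choose j1 j2 hj12 hne1 hne2 using hrow
      set Pairs : Finset (Fin p × Fin p) :=
        (Finset.univ.image fun i => (i, j1 i)) ∪ (Finset.univ.image fun i => (i, j2 i))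
        with hPairs
      have hPairscard : Pairs.card = 2 * p := by
        rw [hPairs, Finset.card_union_of_disjoint, Finset.card_image_of_injective,
          Finset.card_image_of_injective, Finset.card_univ, Fintype.card_fin]
        · ring
        · intro u v huv
          exact (Prod.mk.injEq _ _ _ _).mp huv |>.1
        · intro u v huv
          exact (Prod.mk.injEq _ _ _ _).mp huv |>.1
        · rw [Finset.disjoint_left]
          rintro ⟨u, v⟩ h1 h2
          obtain ⟨u1, -, he1⟩ := Finset.mem_image.mp h1
          obtain ⟨u2, -, he2⟩ := Finset.mem_image.mp h2
          obtain ⟨e1, e2⟩ := (Prod.mk.injEq _ _ _ _).mp he1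
          obtain ⟨e3, e4⟩ := (Prod.mk.injEq _ _ _ _).mp he2
          apply hj12 u
          rw [e1] at e2
          rw [e3] at e4
          rw [e2, e4]
      have hone : ∀ ij ∈ Pairs, 1 ≤ (Nat.digits p ((M ij).card)).sum := by
        intro ij hij
        have hne : (M ij).Nonempty := by
          rw [hPairs, Finset.mem_union] at hij
          rcases hij with h | h
          · obtain ⟨u, -, rfl⟩ := Finset.mem_image.mp h
            exact hne1 u
          · obtain ⟨u, -, rfl⟩ := Finset.mem_image.mp h
            exact hne2 u
        exact digits_sum_pos hp.two_le (Finset.card_pos.mpr hne)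
      calc 2 * p = Pairs.card • 1 := by rw [hPairscard, smul_eq_mul, mul_one]
      _ ≤ ∑ ij ∈ Pairs, (Nat.digits p ((M ij).card)).sum :=
          Finset.card_nsmul_le_sum _ _ _ hone
      _ ≤ ∑ ij, (Nat.digits p ((M ij).card)).sum :=
          Finset.sum_le_sum_of_subset (Finset.subset_univ _)
    have hb' := legendre hp (p ^ n)
    rw [digits_sum_pow hp.two_le] at hb'
    set T := ∑ ij, (((M ij).card).factorial).factorization p with hT
    set S := ∑ ij, (Nat.digits p ((M ij).card)).sum with hSd
    have hexp2 : d ≤ T := hexp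
    have hLP2 : (p - 1) * T + S = p ^ n := hLP
    have hS2 : 2 * p ≤ S := hS
    have hb2 : (p - 1) * b + 1 = p ^ n := hb'
    have m1 : (p - 1) * b ≤ (p - 1) * (d + 2) := Nat.mul_le_mul_left _ hbd
    have m2 : (p - 1) * (d + 2) = (p - 1) * d + (p - 1) * 2 := by ring
    have m3 : (p - 1) * d ≤ (p - 1) * T := Nat.mul_le_mul_left _ hexp
    have := hp.two_le
    omega

end Unique3

end UIMaux
end

/-- A Sylow `p`-subgroup of `S_{pⁿ}` has a unique subgroup of index `p` that is a direct
product of Sylow `p`-subgroups of the symmetric groups on the parts of a partition of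
`{1,…,pⁿ}` into `p` sets of size `p^{n-1}`. -/
theorem unique_intransitive_maximal {p n : ℕ} (hp : p.Prime) (hn : 1 ≤ n)
    (P : Sylow p (Equiv.Perm (Fin (p ^ n)))) :
    ∃! H : Subgroup (Equiv.Perm (Fin (p ^ n))),
      H ≤ (P : Subgroup (Equiv.Perm (Fin (p ^ n)))) ∧
      (H.subgroupOf (P : Subgroup (Equiv.Perm (Fin (p ^ n))))).index = p ∧
      IsSylowProductForm p n H := by
  classical
  haveI : Fact p.Prime := ⟨hp⟩
  obtain ⟨H₀, hform₀, hcard₀⟩ := UIMaux.exists_form hp hn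
  have hpg₀ : IsPGroup p H₀ := IsPGroup.of_card hcard₀
  obtain ⟨P₀, hle₀⟩ := hpg₀.exists_le_sylow
  obtain ⟨g, hg⟩ := MulAction.exists_smul_eq (Equiv.Perm (Fin (p ^ n))) P₀ P
  set H := Subgroup.map (MulAut.conj g).toMonoidHom H₀ with hHdef
  have hform : IsSylowProductForm p n H := UIMaux.form_conj hp hform₀ g
  have hcoe : ((g • P₀ : Sylow p (Equiv.Perm (Fin (p ^ n)))) : Subgroup (Equiv.Perm (Fin (p ^ n))))
      = Subgroup.map (MulAut.conj g).toMonoidHom ↑P₀ := by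
    rw [Sylow.smul_def, Sylow.pointwise_smul_def, Subgroup.pointwise_smul_def]
    rfl
  have hHP : H ≤ (P : Subgroup (Equiv.Perm (Fin (p ^ n)))) := by
    rw [← hg, hcoe, hHdef]
    exact Subgroup.map_mono hle₀
  have hcardH : Nat.card H = p ^ ((p ^ n).factorial.factorization p - 1) := by
    have h1 : Nat.card H = Nat.card H₀ :=
      (Nat.card_congr (Subgroup.equivMapOfInjective _ _ (MulAut.conj g).injective).toEquiv).symm
    rw [h1, hcard₀]
    congr 1
    have := UIMaux.key_arith hp hn
    omega
  have hidx : (H.subgroupOf (P : Subgroup (Equiv.Perm (Fin (p ^ n))))).index = p :=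
    UIMaux.index_of_card hp hn P hHP hcardH
  refine ⟨H, ⟨hHP, hidx, hform⟩, ?_⟩
  rintro H' ⟨hH', hidx', hform'⟩
  exact UIMaux.forms_eq hp hn P hH' hidx' hform' hHP hidx hform
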